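/- Let n ≥ 1 and d ≥ 1 be integers. A pair (z, l), where z = (z_1 ≥ z_2 ≥ … ≥ z_n ≥ 0) is a partition with at most n parts and l is a nonnegative integer, belongs to 𝒵^d_n if and only if l = n−1 and there exists an integer c with 0 ≤ c ≤ d−1 such that z_1 = z_2 = … = z_n = c. In particular, ((d−1, …, d−1), n−1) ∈ 𝒵^d_n. -/
import Mathlib


/-- Membership in the set `𝒵^d_n`: `(z, l)` with `z` a partition with at most `n` parts
(a weakly decreasing tuple of naturals), `0 ≤ l ≤ n-1`, `z_1 = ⋯ = z_{l+1} ≤ d-1` and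
`|z| + (d - z_1)·l + 1 ≤ n·d ≤ |z| + (d - z_1)·(l+1)`. -/
def inZ (n d : ℕ) (hn : 0 < n) (z : Fin n → ℕ) (l : ℕ) : Prop :=
  Antitone z ∧ l ≤ n - 1 ∧
    (∀ i : Fin n, (i : ℕ) ≤ l → z i = z ⟨0, hn⟩) ∧
    z ⟨0, hn⟩ ≤ d - 1 ∧
    (∑ i, z i) + (d - z ⟨0, hn⟩) * l + 1 ≤ n * d ∧
    n * d ≤ (∑ i, z i) + (d - z ⟨0, hn⟩) * (l + 1)

theorem statement4 (n d : ℕ) (hn : 0 < n) (hd : 1 ≤ d) :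
    (∀ (z : Fin n → ℕ) (l : ℕ),
      inZ n d hn z l ↔ (l = n - 1 ∧ ∃ c ≤ d - 1, ∀ i, z i = c)) ∧
    inZ n d hn (fun _ => d - 1) (n - 1) := by
  have main : ∀ (z : Fin n → ℕ) (l : ℕ),
      inZ n d hn z l ↔ (l = n - 1 ∧ ∃ c ≤ d - 1, ∀ i, z i = c) := by
    intro z l
    constructor
    · rintro ⟨hanti, hl, heq, hle, h1, h2⟩
      set c := z ⟨0, hn⟩ with hc
      set e := d - c with he
      have hcd : c + e = d := by omega
      have hsum : (∑ i, z i) ≤ n * c := by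
        calc (∑ i, z i) ≤ ∑ _i : Fin n, c := by
              apply Finset.sum_le_sum
              intro i _
              exact hanti (show (⟨0, hn⟩ : Fin n) ≤ i from by simp [Fin.le_def])
          _ = n * c := by simp [Finset.sum_const, mul_comm]
      have hnd : n * d = n * c + n * e := by
        rw [← Nat.mul_add, hcd]
      have h2' : n * e ≤ e * (l + 1) := by omega
      have h2'' : e * n ≤ e * (l + 1) := by rw [mul_comm] at h2'; exact h2'
      have hepos : 0 < e := by omega
      have hnl : n ≤ l + 1 := Nat.le_of_mul_le_mul_left h2'' hepos
      have hleq : l = n - 1 := by omega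
      refine ⟨hleq, c, hle, fun i => heq i ?_⟩
      have := i.isLt
      omega
    · rintro ⟨hl, c, hc, hz⟩
      have hz0 : z ⟨0, hn⟩ = c := hz _
      have hsum : (∑ i, z i) = n * c := by
        simp [hz, Finset.sum_const, mul_comm]
      have hcd : c < d := by omega
      set e := d - c with he
      have hepos : 0 < e := by omega
      have hnd : n * d = n * c + n * e := by
        rw [← Nat.mul_add]; congr 1; omega
      have key : e * (n - 1) + e = e * n := by
        rw [← Nat.mul_succ]; congr 1; omega
      refine ⟨?_, by omega, fun i _ => by rw [hz, hz0], by omega, ?_, ?_⟩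
      · intro a b _; rw [hz, hz]
      · rw [hsum, hz0, hl, ← he]
        have hmc : n * e = e * n := mul_comm n e
        omega
      · rw [hsum, hz0, hl, ← he]
        have : n - 1 + 1 = n := by omega
        rw [this]
        have hmc : n * e = e * n := mul_comm n e
        omega
  refine ⟨main, (main _ _).mpr ⟨rfl, d - 1, le_refl _, fun _ => rfl⟩⟩
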